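/- Under the regularity assumption, let f : ℝ₊ → ℝⁿ₊ be continuous and strictly increasing in each component, and define q_i* = inf{q' ≥ 0 : V_i(f(q')) ≥ 0} for each bank i (assume each q_i* < ∞). Then the largest solvency threshold is determined as if no other bank defaults: max_{i≤n} q_i* = max_{i≤n} inf{q' ≥ 0 : f_i(q') ≥ p̄_i − Σ_{j=1}^n L_{ji}}. -/
import Mathlib


open Matrix BigOperators

noncomputable section

/-- Total liabilities `p̄_i = Σ_{j=1}^{n+1} L_{ij}`. -/
def pbar {n : ℕ} (L : Matrix (Fin n) (Fin (n + 1)) ℝ) (i : Fin n) : ℝ :=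
  ∑ j, L i j

/-- Relative liabilities `π_{ij} = L_{ij} / p̄_i` if `p̄_i > 0`, else `0`. -/
def relLiab {n : ℕ} (L : Matrix (Fin n) (Fin (n + 1)) ℝ) (i j : Fin n) : ℝ :=
  if 0 < pbar L i then L i j.castSucc / pbar L i else 0

/-- The clearing map in wealths `Ψ_x`. -/
def Psi {n : ℕ} (L : Matrix (Fin n) (Fin (n + 1)) ℝ) (αx αL : ℝ)
    (x V : Fin n → ℝ) (i : Fin n) : ℝ :=
  if 0 ≤ V i then
    x i + ∑ j, relLiab L j i * max (pbar L j - max (-(V j)) 0) 0 - pbar L i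
  else
    αx * x i + αL * ∑ j, relLiab L j i * max (pbar L j - max (-(V j)) 0) 0 - pbar L i


lemma relLiab_nonneg {n : ℕ} (L : Matrix (Fin n) (Fin (n + 1)) ℝ)
    (hL : ∀ i j, 0 ≤ L i j) (i j : Fin n) : 0 ≤ relLiab L i j := by
  unfold relLiab
  split
  · exact div_nonneg (hL _ _) (le_of_lt (by assumption))
  · exact le_refl 0

lemma relLiab_mul_pbar {n : ℕ} (L : Matrix (Fin n) (Fin (n + 1)) ℝ)
    (i j : Fin n) (h : 0 < pbar L i) :
    relLiab L i j * pbar L i = L i j.castSucc := by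
  unfold relLiab
  rw [if_pos h, div_mul_cancel₀ _ (ne_of_gt h)]

/-- Under the regularity assumption, for `f : ℝ₊ → ℝⁿ₊` continuous and strictly increasing in
each component, the largest solvency threshold `max_i q_i*` is determined as if no other bank
defaults: `max_i q_i* = max_i inf{q' ≥ 0 : f_i(q') ≥ p̄_i − Σ_j L_{ji}}`. -/
theorem largest_solvency_threshold (n : ℕ) (hn : 0 < n)
    (L : Matrix (Fin n) (Fin (n + 1)) ℝ)
    (hL : ∀ i j, 0 ≤ L i j) (hLdiag : ∀ i : Fin n, L i i.castSucc = 0)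
    (αx αL : ℝ) (hαx : αx ∈ Set.Icc (0 : ℝ) 1) (hαL : αL ∈ Set.Icc (0 : ℝ) 1)
    (hreg : ∀ i, 0 < pbar L i ∧ ∑ j, relLiab L i j < 1)
    (Vmap : (Fin n → ℝ) → (Fin n → ℝ))
    (hV : ∀ x : Fin n → ℝ, (∀ i, 0 ≤ x i) →
      IsGreatest {V | Psi L αx αL x V = V} (Vmap x))
    (f : ℝ → Fin n → ℝ)
    (hfc : ∀ i, ContinuousOn (fun u => f u i) (Set.Ici (0 : ℝ)))
    (hfs : ∀ i, StrictMonoOn (fun u => f u i) (Set.Ici (0 : ℝ)))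
    (hfpos : ∀ u : ℝ, 0 ≤ u → ∀ i, 0 ≤ f u i)
    (qstar : Fin n → ℝ)
    (hqstar : ∀ i, qstar i = sInf {q' : ℝ | 0 ≤ q' ∧ 0 ≤ Vmap (f q') i})
    (hne : ∀ i, {q' : ℝ | 0 ≤ q' ∧ 0 ≤ Vmap (f q') i}.Nonempty) :
    (⨆ i : Fin n, qstar i)
      = ⨆ i : Fin n,
          sInf {q' : ℝ | 0 ≤ q' ∧ pbar L i - (∑ j, L j i.castSucc) ≤ f q' i} := by

  haveI : Nonempty (Fin n) := ⟨⟨0, hn⟩⟩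
  have hApbar : ∀ i j : Fin n, relLiab L j i * pbar L j = L j i.castSucc := fun i j =>
    relLiab_mul_pbar L j i (hreg j).1
  set S : Fin n → Set ℝ := fun i => {q' : ℝ | 0 ≤ q' ∧ 0 ≤ Vmap (f q') i} with hSdef
  set T : Fin n → Set ℝ :=
    fun i => {q' : ℝ | 0 ≤ q' ∧ pbar L i - (∑ j, L j i.castSucc) ≤ f q' i} with hTdef
  -- (1): solvency at the greatest fixed point forces the standalone condition
  have hS2T : ∀ (q' : ℝ) (i : Fin n), 0 ≤ q' → 0 ≤ Vmap (f q') i →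
      pbar L i - (∑ j, L j i.castSucc) ≤ f q' i := by
    intro q' i hq hVi
    have hx : ∀ j, 0 ≤ f q' j := hfpos q' hq
    have hfix := (hV (f q') hx).1
    have heq := congrFun hfix i
    simp only [Psi] at heq
    rw [if_pos hVi] at heq
    have hsum : ∑ j, relLiab L j i * max (pbar L j - max (-(Vmap (f q') j)) 0) 0
        ≤ ∑ j, L j i.castSucc := by
      apply Finset.sum_le_sum
      intro j _
      rw [← hApbar i j]
      refine mul_le_mul_of_nonneg_left ?_ (relLiab_nonneg L hL j i)
      exact max_le (sub_le_self _ (le_max_right _ _)) (hreg j).1.le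
    linarith
  -- (2): if every bank satisfies the standalone condition, everyone is solvent
  have hT2S : ∀ (q' : ℝ), 0 ≤ q' → (∀ j, pbar L j - (∑ k, L k j.castSucc) ≤ f q' j) →
      ∀ i, 0 ≤ Vmap (f q') i := by
    intro q' hq hge i
    have hx : ∀ j, 0 ≤ f q' j := hfpos q' hq
    set V : Fin n → ℝ := fun j => f q' j + (∑ k, L k j.castSucc) - pbar L j with hVdef
    have hVnn : ∀ j, 0 ≤ V j := by
      intro j
      have := hge j
      simp only [hVdef]
      linarith
    have hfix : Psi L αx αL (f q') V = V := by
      funext k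
      unfold Psi
      rw [if_pos (hVnn k)]
      have hterm : ∀ j : Fin n,
          relLiab L j k * max (pbar L j - max (-(V j)) 0) 0 = L j k.castSucc := by
        intro j
        have h1 : max (-(V j)) 0 = 0 := max_eq_right (neg_nonpos.mpr (hVnn j))
        rw [h1, sub_zero, max_eq_left (hreg j).1.le, hApbar k j]
      rw [Finset.sum_congr rfl (fun j _ => hterm j)]
    have hle : V ≤ Vmap (f q') := (hV (f q') hx).2 hfix
    exact le_trans (hVnn i) (hle i)
  have hTne : ∀ i, (T i).Nonempty := fun i =>
    (hne i).imp (fun q hq => ⟨hq.1, hS2T q i hq.1 hq.2⟩)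
  have hTbdd : ∀ i, BddBelow (T i) := fun i => ⟨0, fun q hq => hq.1⟩
  have hSbdd : ∀ i, BddBelow (S i) := fun i => ⟨0, fun q hq => hq.1⟩
  have hbddT : BddAbove (Set.range fun j => sInf (T j)) :=
    Set.Finite.bddAbove (Set.finite_range _)
  have hbddq : BddAbove (Set.range qstar) := Set.Finite.bddAbove (Set.finite_range _)
  apply le_antisymm
  · apply ciSup_le
    intro i
    rw [hqstar i]
    apply le_of_forall_pos_le_add
    intro ε hε
    have hb0 : 0 ≤ ⨆ j, sInf (T j) :=
      le_trans (le_csInf (hTne i) (fun q hq => hq.1)) (le_ciSup hbddT i)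
    have hmem : (⨆ j, sInf (T j)) + ε ∈ S i := by
      refine ⟨by linarith, hT2S _ (by linarith) ?_ i⟩
      intro j
      have hlt : sInf (T j) < (⨆ j, sInf (T j)) + ε :=
        lt_of_le_of_lt (le_ciSup hbddT j) (by linarith)
      obtain ⟨t, htT, htlt⟩ := (csInf_lt_iff (hTbdd j) (hTne j)).mp hlt
      calc pbar L j - ∑ k, L k j.castSucc ≤ f t j := htT.2
        _ ≤ f ((⨆ j, sInf (T j)) + ε) j :=
          (hfs j).monotoneOn htT.1 (by simp only [Set.mem_Ici]; linarith) htlt.le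
    exact csInf_le (hSbdd i) hmem
  · apply ciSup_le
    intro i
    have h1 : sInf (T i) ≤ qstar i := by
      rw [hqstar i]
      exact csInf_le_csInf (hTbdd i) (hne i) (fun q hq => ⟨hq.1, hS2T q i hq.1 hq.2⟩)
    exact h1.trans (le_ciSup hbddq i)
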